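/- Let 0 ≤ a < b ≤ 1 be constants, and let X_1, ..., X_n be Boolean random variables satisfying Pr[∀ i ∈ S, X_i = 1] ≤ a^{|S|} for every subset S ⊆ {1,...,n}. Then Pr[∑ X_i ≥ n(a+b)/2] ≤ e^{-n(b-a)²/2}. -/

import Mathlib

/-!
For Boolean `X i`, `exp (t * X i) = 1 + (exp t - 1) * X i`, so expanding the product
`exp (t * ∑ X i)` over subsets `S` and using `E[∏ i ∈ S, X i] = P[∀ i ∈ S, X i = 1] ≤ a ^ #S`
bounds the moment generating function of `∑ X i` by `(1 - a + a * exp t) ^ n`, the one of a sum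
of `n` independent Bernoulli(`a`) variables. The Chernoff bound together with Hoeffding's lemma
`1 - a + a * exp t ≤ exp (t * a + t ^ 2 / 8)` then gives the tail bound `exp (-2 * n * δ ^ 2)`
at the threshold `n * (a + δ)`, here with `δ = (b - a) / 2`.
-/

open MeasureTheory Real ProbabilityTheory Finset

/-- Hoeffding's lemma for the Bernoulli(`p`) law on `{0, 1}`. -/
theorem one_sub_add_mul_exp_le_exp {p : ℝ} (hp₀ : 0 ≤ p) (hp₁ : p ≤ 1) (t : ℝ) :
    1 - p + p * exp t ≤ exp (t * p + t ^ 2 / 8) := by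
  set q : unitInterval := ⟨p, hp₀, hp₁⟩
  have hmean : ∫ x, x ∂Ber((1 : ℝ), 0, q) = p := by
    simp [integral_bernoulliMeasure, q]
  have hsupp : ∀ᵐ x ∂Ber((1 : ℝ), 0, q), x ∈ Set.Icc (0 : ℝ) 1 := by
    rw [ae_iff]
    exact bernoulliMeasure_apply_of_notMem_of_notMem q measurableSet_Icc.compl (by simp) (by simp)
  have hoeffding := (hasSubgaussianMGF_of_mem_Icc (X := id) aemeasurable_id hsupp).mgf_le t
  simp only [mgf, id, hmean, integral_bernoulliMeasure, q] at hoeffding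
  norm_num at hoeffding
  calc 1 - p + p * exp t
      = exp (t * p) * (p * exp (t * (1 - p)) + (1 - p) * exp (-(t * p))) := by
        rw [mul_add, mul_left_comm, ← exp_add, mul_left_comm, ← exp_add, add_neg_cancel,
          exp_zero, show t * p + t * (1 - p) = t by ring]
        ring
    _ ≤ exp (t * p) * exp (1 / 4 * t ^ 2 / 2) := by gcongr
    _ = exp (t * p + t ^ 2 / 8) := by rw [← exp_add]; ring_nf

theorem exp_mul_eq_one_add_mul {x t : ℝ} (hx : x = 0 ∨ x = 1) :
    exp (t * x) = 1 + (exp t - 1) * x := by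
  rcases hx with rfl | rfl <;> simp

section BooleanFamily

variable {ι Ω : Type*} {X : ι → Ω → ℕ}

theorem prod_eq_indicator_setOf_forall_eq_one (hX : ∀ i ω, X i ω = 0 ∨ X i ω = 1)
    (S : Finset ι) (ω : Ω) :
    ∏ i ∈ S, (X i ω : ℝ) = {ω | ∀ i ∈ S, X i ω = 1}.indicator 1 ω := by
  simp only [Set.indicator_apply, Set.mem_ofPred_eq, Pi.one_apply]
  split_ifs with h
  · exact prod_eq_one fun i hi => by simp [h i hi]
  · obtain ⟨i, hi, hne⟩ := not_forall₂.mp h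
    exact prod_eq_zero hi (by simp [(hX i ω).resolve_right hne])

theorem exp_mul_sum_eq_sum_powerset [Fintype ι] (hX : ∀ i ω, X i ω = 0 ∨ X i ω = 1)
    (t : ℝ) (ω : Ω) :
    exp (t * ∑ i, (X i ω : ℝ)) =
      ∑ S ∈ univ.powerset, (exp t - 1) ^ #S * {ω | ∀ i ∈ S, X i ω = 1}.indicator 1 ω := by
  have hX' (i) : (X i ω : ℝ) = 0 ∨ (X i ω : ℝ) = 1 := by exact_mod_cast hX i ω
  simp_rw [← prod_eq_indicator_setOf_forall_eq_one hX, mul_sum, exp_sum,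
    exp_mul_eq_one_add_mul (hX' _), prod_one_add, prod_mul_distrib, prod_const]

variable [MeasurableSpace Ω] {μ : Measure Ω}

theorem measurableSet_setOf_forall_eq_one (hXm : ∀ i, Measurable (X i)) (S : Finset ι) :
    MeasurableSet {ω | ∀ i ∈ S, X i ω = 1} := by
  simp only [Set.ofPred_forall]
  exact S.measurableSet_biInter fun i _ => hXm i (measurableSet_singleton 1)

theorem integrable_const_mul_indicator_setOf_forall_eq_one [IsFiniteMeasure μ]
    (hXm : ∀ i, Measurable (X i)) (S : Finset ι) (c : ℝ) :
    Integrable (fun ω => c * {ω | ∀ i ∈ S, X i ω = 1}.indicator 1 ω) μ :=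
  ((integrable_const 1).indicator (measurableSet_setOf_forall_eq_one hXm S)).const_mul c

theorem integrable_exp_mul_sum [Fintype ι] [IsFiniteMeasure μ] (hXm : ∀ i, Measurable (X i))
    (hX : ∀ i ω, X i ω = 0 ∨ X i ω = 1) (t : ℝ) :
    Integrable (fun ω => exp (t * ∑ i, (X i ω : ℝ))) μ := by
  simp_rw [exp_mul_sum_eq_sum_powerset hX]
  exact integrable_finsetSum _ fun S _ =>
    integrable_const_mul_indicator_setOf_forall_eq_one hXm S _

theorem mgf_sum_eq_sum_powerset [Fintype ι] [IsFiniteMeasure μ] (hXm : ∀ i, Measurable (X i))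
    (hX : ∀ i ω, X i ω = 0 ∨ X i ω = 1) (t : ℝ) :
    mgf (fun ω => ∑ i, (X i ω : ℝ)) μ t =
      ∑ S ∈ univ.powerset, (exp t - 1) ^ #S * μ.real {ω | ∀ i ∈ S, X i ω = 1} := by
  simp_rw [mgf, exp_mul_sum_eq_sum_powerset hX]
  rw [integral_finsetSum _ fun S _ => integrable_const_mul_indicator_setOf_forall_eq_one hXm S _]
  simp_rw [integral_const_mul, integral_indicator_one (measurableSet_setOf_forall_eq_one hXm _)]

theorem mgf_sum_le_of_measureReal_forall_eq_one_le [Fintype ι] [IsFiniteMeasure μ]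
    (hXm : ∀ i, Measurable (X i)) (hX : ∀ i ω, X i ω = 0 ∨ X i ω = 1) {a t : ℝ} (ht : 0 ≤ t)
    (h : ∀ S : Finset ι, μ.real {ω | ∀ i ∈ S, X i ω = 1} ≤ a ^ #S) :
    mgf (fun ω => ∑ i, (X i ω : ℝ)) μ t ≤ (1 + (exp t - 1) * a) ^ Fintype.card ι := by
  have hc : 0 ≤ exp t - 1 := sub_nonneg.2 (one_le_exp ht)
  calc mgf (fun ω => ∑ i, (X i ω : ℝ)) μ t
      = ∑ S ∈ univ.powerset, (exp t - 1) ^ #S * μ.real {ω | ∀ i ∈ S, X i ω = 1} :=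
        mgf_sum_eq_sum_powerset hXm hX t
    _ ≤ ∑ S ∈ univ.powerset, (exp t - 1) ^ #S * a ^ #S := by gcongr with S; exact h S
    _ = (1 + (exp t - 1) * a) ^ Fintype.card ι := by
        rw [← card_univ, ← prod_const, prod_one_add]
        simp_rw [prod_const, mul_pow]

theorem measureReal_sum_ge_le_of_measureReal_forall_eq_one_le [Fintype ι] [IsFiniteMeasure μ]
    (hXm : ∀ i, Measurable (X i)) (hX : ∀ i ω, X i ω = 0 ∨ X i ω = 1) {a δ : ℝ} (ha₀ : 0 ≤ a)
    (ha₁ : a ≤ 1) (hδ : 0 ≤ δ) (h : ∀ S : Finset ι, μ.real {ω | ∀ i ∈ S, X i ω = 1} ≤ a ^ #S) :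
    μ.real {ω | Fintype.card ι * (a + δ) ≤ ∑ i, (X i ω : ℝ)} ≤
      exp (-2 * Fintype.card ι * δ ^ 2) := by
  set n := Fintype.card ι
  -- `t = 4 * δ` minimises the exponent `n * (t ^ 2 / 8 - t * δ)`.
  calc μ.real {ω | n * (a + δ) ≤ ∑ i, (X i ω : ℝ)}
      ≤ exp (-(4 * δ) * (n * (a + δ))) * mgf (fun ω => ∑ i, (X i ω : ℝ)) μ (4 * δ) :=
        measure_ge_le_exp_mul_mgf _ (by positivity) (integrable_exp_mul_sum hXm hX _)
    _ ≤ exp (-(4 * δ) * (n * (a + δ))) * exp (4 * δ * a + (4 * δ) ^ 2 / 8) ^ n := by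
        grw [mgf_sum_le_of_measureReal_forall_eq_one_le hXm hX (by positivity) h]
        gcongr
        · exact add_nonneg zero_le_one (mul_nonneg (sub_nonneg.2 (one_le_exp (by positivity))) ha₀)
        · linarith [one_sub_add_mul_exp_le_exp ha₀ ha₁ (4 * δ)]
    _ = exp (-2 * n * δ ^ 2) := by rw [← exp_nat_mul, ← exp_add]; ring_nf

end BooleanFamily

theorem soundness_parallel_repetition
    {Ω : Type*} [Fintype Ω] [MeasurableSpace Ω] [MeasurableSingletonClass Ω]
    (μ : Measure Ω) [IsProbabilityMeasure μ] (n : ℕ)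
    (X : Fin n → Ω → ℕ) (hX : ∀ i ω, X i ω = 0 ∨ X i ω = 1)
    (a b : ℝ) (ha : 0 ≤ a) (hab : a < b) (hb : b ≤ 1)
    (h : ∀ S : Finset (Fin n),
      (μ {ω | ∀ i ∈ S, X i ω = 1}).toReal ≤ a ^ S.card) :
    (μ {ω | (n : ℝ) * (a + b) / 2 ≤ ∑ i, (X i ω : ℝ)}).toReal ≤
      Real.exp (-(n : ℝ) * (b - a) ^ 2 / 2) := by
  have threshold := measureReal_sum_ge_le_of_measureReal_forall_eq_one_le
    (fun i => measurable_of_finite (X i)) hX ha (hab.le.trans hb) (δ := (b - a) / 2)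
    (by linarith) h
  rw [Fintype.card_fin] at threshold
  calc (μ {ω | (n : ℝ) * (a + b) / 2 ≤ ∑ i, (X i ω : ℝ)}).toReal
      = μ.real {ω | n * (a + (b - a) / 2) ≤ ∑ i, (X i ω : ℝ)} := by
        rw [show (n : ℝ) * (a + b) / 2 = n * (a + (b - a) / 2) by ring]; rfl
    _ ≤ exp (-2 * n * ((b - a) / 2) ^ 2) := threshold
    _ = exp (-(n : ℝ) * (b - a) ^ 2 / 2) := by ring_nf
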